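/- Let G be a TSO game of group II, i.e. both players are permitted to update buffer messages exactly before their own moves (and at no other time). Suppose σ_X is a positional winning strategy for some player X from a configuration c_0. Define the positional strategy σ̄_X as follows: for c with σ_X(c) = c', if there is a non-read instruction transition c →(instr_ι) c', then σ̄_X(c) = c̃', where c̃' is obtained by first flushing all buffers of c (reaching c̄) and then executing instr_ι from c̄; otherwise (the move from c to c' is only possible via a read instruction) σ̄_X(c) = c'. Then σ̄_X is a winning strategy for player X from c_0. -/

import Mathlib

namespace TSOGames

/-- The data of a (safety) game: a partition of the configurations into those of
player A (`isA`) and those of player B, a transition relation, and final configurations. -/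
structure SGame (C : Type*) where
  isA : C → Prop
  step : C → C → Prop
  final : C → Prop

namespace SGame

variable {C : Type*} (G : SGame C)

/-- The transition relation alternates between the two players' configurations. -/
def Alternating : Prop := ∀ c c', G.step c c' → (G.isA c ↔ ¬ G.isA c')

/-- Every configuration has at least one successor. -/
def DeadlockFree : Prop := ∀ c, ∃ c', G.step c c'

/-- Final configurations belong to player A. -/
def FinalInA : Prop := ∀ c, G.final c → G.isA c

/-- An (infinite) play: consecutive configurations are related by `step`. -/
def IsPlay (ρ : ℕ → C) : Prop := ∀ i, G.step (ρ i) (ρ (i + 1))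

/-- A (history-dependent) strategy `σ`, given the strict history and the current
configuration, chooses a successor; it is valid for the player owning the
configurations satisfying `own` if it always chooses an actual successor. -/
def ValidStrat (own : C → Prop) (σ : List C → C → C) : Prop :=
  ∀ h c, own c → G.step c (σ h c)

/-- A play is consistent with the strategy `σ` of the player owning the
configurations satisfying `own` if at every such configuration the play follows `σ`. -/
def Consistent (own : C → Prop) (σ : List C → C → C) (ρ : ℕ → C) : Prop :=
  ∀ i, own (ρ i) → ρ (i + 1) = σ (List.ofFn fun j : Fin i => ρ j) (ρ i)

/-- A play is winning for player B if it visits a final configuration. -/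
def BWins (ρ : ℕ → C) : Prop := ∃ i, G.final (ρ i)

/-- A play is winning for player A if it never visits a final configuration. -/
def AWinsPlay (ρ : ℕ → C) : Prop := ¬ G.BWins ρ

/-- `σ` is a winning strategy from `c0` for the player owning the configurations
satisfying `own`, whose plays are winning when they satisfy `winPlay`:
it is valid and every play from `c0` consistent with it is winning. -/
def WinningStrat (own : C → Prop) (winPlay : (ℕ → C) → Prop)
    (σ : List C → C → C) (c0 : C) : Prop :=
  G.ValidStrat own σ ∧
    ∀ ρ : ℕ → C, ρ 0 = c0 → G.IsPlay ρ → Consistent own σ ρ → winPlay ρ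

/-- The given player has a winning strategy from `c0`. -/
def Wins (own : C → Prop) (winPlay : (ℕ → C) → Prop) (c0 : C) : Prop :=
  ∃ σ, G.WinningStrat own winPlay σ c0

/-- `c0` is winning for player A. -/
def WinA (c0 : C) : Prop := G.Wins (fun c => G.isA c) G.AWinsPlay c0

/-- `c0` is winning for player B. -/
def WinB (c0 : C) : Prop := G.Wins (fun c => ¬ G.isA c) G.BWins c0

end SGame

/-- Restriction of a game to a subset `D` of its configurations. -/
def restrictGame {C : Type*} (G : SGame C) (D : Set C) : SGame C where
  isA := G.isA
  step := fun c c' => G.step c c' ∧ c ∈ D ∧ c' ∈ D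
  final := fun c => G.final c ∧ c ∈ D

/-- The winning condition on plays for the player encoded by `b` (`true` = player A,
who wins a play iff it avoids the final configurations; `false` = player B). -/
def winPlayOf {C : Type*} (G : SGame C) (b : Bool) : (ℕ → C) → Prop :=
  fun ρ => if b then ¬ G.BWins ρ else G.BWins ρ

end TSOGames
namespace TSOGames

/-- TSO instructions: read, write, skip, and memory fence. -/
inductive Instr (X V : Type*) : Type _
  | read (x : X) (v : V)
  | write (x : X) (v : V)
  | skip
  | fence

/-- Whether an instruction is a read instruction. -/
def Instr.isRead {X V : Type*} : Instr X V → Bool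
  | .read _ _ => true
  | _ => false

/-- A concurrent program: a family of processes indexed by `I`, each a transition
system over local states `S` labeled by instructions over variables `X` and values `V`. -/
structure Program (I S X V : Type*) where
  delta : I → S → Instr X V → S → Prop

/-- A TSO configuration: local states, per-process FIFO store buffers
(newest message at the head, oldest at the end), and the shared memory. -/
structure Conf (I S X V : Type*) where
  st : I → S
  buf : I → List (X × V)
  mem : X → V

section TSO

variable {I S X V : Type*}

/-- The value of the most recent buffered write on `x`, if any
(the buffer stores the newest message first). -/
def bufVal [DecidableEq X] : List (X × V) → X → Option V
  | [], _ => none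
  | (y, v) :: rest, x => if y = x then some v else bufVal rest x

/-- The value process `ι` reads from variable `x`: the most recent buffered write of
`ι` on `x` if there is one, and the memory value otherwise. -/
def readVal [DecidableEq X] (c : Conf I S X V) (ι : I) (x : X) : V :=
  (bufVal (c.buf ι) x).getD (c.mem x)

variable [DecidableEq I] [DecidableEq X]

/-- Execution of one instruction by process `ι` under TSO semantics. -/
inductive InstrStep (P : Program I S X V) (ι : I) (instr : Instr X V) :
    Conf I S X V → Conf I S X V → Prop
  | read (c : Conf I S X V) (x : X) (v : V) (s' : S) :
      instr = Instr.read x v → P.delta ι (c.st ι) (Instr.read x v) s' →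
      readVal c ι x = v →
      InstrStep P ι instr c ⟨Function.update c.st ι s', c.buf, c.mem⟩
  | write (c : Conf I S X V) (x : X) (v : V) (s' : S) :
      instr = Instr.write x v → P.delta ι (c.st ι) (Instr.write x v) s' →
      InstrStep P ι instr c
        ⟨Function.update c.st ι s', Function.update c.buf ι ((x, v) :: c.buf ι), c.mem⟩
  | skip (c : Conf I S X V) (s' : S) :
      instr = Instr.skip → P.delta ι (c.st ι) Instr.skip s' →
      InstrStep P ι instr c ⟨Function.update c.st ι s', c.buf, c.mem⟩
  | fence (c : Conf I S X V) (s' : S) :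
      instr = Instr.fence → P.delta ι (c.st ι) Instr.fence s' → c.buf ι = [] →
      InstrStep P ι instr c ⟨Function.update c.st ι s', c.buf, c.mem⟩

/-- An update step: the oldest buffered message of some process is committed to memory. -/
inductive UpdStep : Conf I S X V → Conf I S X V → Prop
  | mk (c : Conf I S X V) (ι : I) (x : X) (v : V) (w : List (X × V)) :
      c.buf ι = w ++ [(x, v)] →
      UpdStep c ⟨c.st, Function.update c.buf ι w, Function.update c.mem x v⟩

/-- Finitely many update steps. -/
def Upds : Conf I S X V → Conf I S X V → Prop := Relation.ReflTransGen UpdStep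

/-- `flush` maps every configuration `c` to the configuration `c̄` obtained by
updating all buffered messages to the memory: `c →up* c̄` and all buffers of `c̄` are empty. -/
def IsFlush (flush : Conf I S X V → Conf I S X V) : Prop :=
  ∀ c, Upds c (flush c) ∧ ∀ ι, (flush c).buf ι = []

/-- Update steps by a player, if she is allowed to perform them (otherwise nothing happens). -/
def OptUpds (allowed : Bool) (c c' : Conf I S X V) : Prop :=
  if allowed then Upds c c' else c' = c

/-- A move of a player whose permissions to update before resp. after her move are
given by `perm`: optional updates before, one instruction, optional updates after. -/
def Move (P : Program I S X V) (perm : Bool × Bool) (c c' : Conf I S X V) : Prop :=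
  ∃ c1 c2, OptUpds perm.1 c c1 ∧ (∃ ι instr, InstrStep P ι instr c1 c2) ∧
    OptUpds perm.2 c2 c'

/-- The TSO game induced by a program `P`, update permissions
`permA`/`permB` = (may update before her move, may update after her move)
for players A and B, and a set `SF` of final local states. Game configurations are
TSO configurations annotated by `true` (player A's) or `false` (player B's). -/
def tsoGame (P : Program I S X V) (permA permB : Bool × Bool) (SF : Set S) :
    SGame (Conf I S X V × Bool) where
  isA := fun c => c.2 = true
  step := fun c c' =>
    (c.2 = true ∧ c'.2 = false ∧ Move P permA c.1 c'.1) ∨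
    (c.2 = false ∧ c'.2 = true ∧ Move P permB c.1 c'.1)
  final := fun c => c.2 = true ∧ ∃ ι, c.1.st ι ∈ SF

/-- The configurations owned by the player encoded by `b` (`true` = player A). -/
def ownOf (b : Bool) : Conf I S X V × Bool → Prop := fun c => c.2 = b

/-- The total number of buffered messages of a configuration. -/
def totalBuf [Fintype I] (c : Conf I S X V) : ℕ := ∑ ι, (c.buf ι).length

end TSO

end TSOGames
namespace TSOGames

variable {I S X V : Type*} [DecidableEq I] [DecidableEq X]

/-- `σbar` is the flushing modification of the positional strategy `σX` of the player
encoded by `xIsA`: at each of her configurations `c` with `σX c = c'`, if some non-read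
instruction transition leads from `c` to `c'`, then `σbar c` is obtained by first
flushing all buffers of `c` and then executing such an instruction (so that
`c' →up* σbar c`); otherwise (the move is only possible via a read) `σbar c = σX c`. -/
def IsFlushMod (P : Program I S X V) (flush : Conf I S X V → Conf I S X V)
    (xIsA : Bool) (σX σbar : Conf I S X V × Bool → Conf I S X V × Bool) : Prop :=
  ∀ c : Conf I S X V × Bool, c.2 = xIsA →
    ((∃ ι instr, Instr.isRead instr = false ∧ InstrStep P ι instr c.1 (σX c).1) →
      (∃ ι instr, Instr.isRead instr = false ∧ InstrStep P ι instr (flush c.1) (σbar c).1) ∧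
        Upds (σX c).1 (σbar c).1 ∧ (σbar c).2 = (σX c).2) ∧
    ((¬ ∃ ι instr, Instr.isRead instr = false ∧ InstrStep P ι instr c.1 (σX c).1) →
      σbar c = σX c)

end TSOGames
namespace TSOGames

/-! A play `ρ` consistent with `σbar` is shadowed by a play `π` consistent with `σX`: `π`
follows `σX` at X's configurations and copies `ρ` at the opponent's. Since `σbar` only appends
update steps to the moves of `σX`, each `π i` reaches `ρ i` by updates with the same player to
move, and equals `ρ i` whenever it is X's turn. In group II the opponent may update before her
move, so from `π i` she can still make the move that `ρ` makes from `ρ i`; and updates leave the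
local states unchanged, so `π` and `ρ` visit final configurations at the same times. -/

namespace SGame

variable {C : Type*}

open Classical in
noncomputable def shadowPlay (own : C → Prop) (σ : C → C) (c0 : C) (ρ : ℕ → C) : ℕ → C
  | 0 => c0
  | i + 1 => if own (shadowPlay own σ c0 ρ i) then σ (shadowPlay own σ c0 ρ i) else ρ (i + 1)

section shadowPlay

variable {own : C → Prop} {σ σ' : C → C} {c0 : C} {ρ : ℕ → C}

theorem shadowPlay_succ_of_own {i : ℕ} (h : own (shadowPlay own σ c0 ρ i)) :
    shadowPlay own σ c0 ρ (i + 1) = σ (shadowPlay own σ c0 ρ i) := by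
  rw [shadowPlay, if_pos h]

theorem shadowPlay_succ_of_not_own {i : ℕ} (h : ¬ own (shadowPlay own σ c0 ρ i)) :
    shadowPlay own σ c0 ρ (i + 1) = ρ (i + 1) := by
  rw [shadowPlay, if_neg h]

theorem consistent_shadowPlay :
    Consistent own (fun _ c => σ c) (shadowPlay own σ c0 ρ) :=
  fun _ h => shadowPlay_succ_of_own h

theorem shadowPlay_rel (R : C → C → Prop) (hR : ∀ c, R c c)
    (h_own : ∀ a b, R a b → (own a ↔ own b))
    (h_mod : ∀ c, own c → σ' c = σ c ∨ (R (σ c) (σ' c) ∧ ¬ own (σ c)))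
    (hρ0 : ρ 0 = c0) (hρ : Consistent own (fun _ c => σ' c) ρ) (i : ℕ) :
    R (shadowPlay own σ c0 ρ i) (ρ i) ∧ (own (ρ i) → shadowPlay own σ c0 ρ i = ρ i) := by
  induction i with
  | zero => exact ⟨hρ0 ▸ hR c0, fun _ => hρ0.symm⟩
  | succ i ih =>
    obtain ⟨hrel, heq⟩ := ih
    by_cases hown : own (ρ i)
    · have hπ : shadowPlay own σ c0 ρ i = ρ i := heq hown
      rw [shadowPlay_succ_of_own (hπ ▸ hown), hπ, hρ i hown]
      rcases h_mod (ρ i) hown with hσ | ⟨hσR, hσown⟩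
      · exact hσ ▸ ⟨hR _, fun _ => rfl⟩
      · exact ⟨hσR, fun h => absurd ((h_own _ _ hσR).2 h) hσown⟩
    · rw [shadowPlay_succ_of_not_own fun h => hown ((h_own _ _ hrel).1 h)]
      exact ⟨hR _, fun _ => rfl⟩

theorem WinningStrat.of_rel (G : SGame C) {winPlay : (ℕ → C) → Prop}
    (R : C → C → Prop) (hR : ∀ c, R c c)
    (h_own : ∀ a b, R a b → (own a ↔ own b))
    (h_step : ∀ a b c, R a b → ¬ own b → G.step b c → G.step a c)
    (h_winPlay : ∀ π ρ : ℕ → C, (∀ i, R (π i) (ρ i)) → winPlay π → winPlay ρ)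
    (h_mod : ∀ c, own c → σ' c = σ c ∨ (R (σ c) (σ' c) ∧ ¬ own (σ c)))
    (hσ' : G.ValidStrat own fun _ c => σ' c)
    (hσ : G.WinningStrat own winPlay (fun _ c => σ c) c0) :
    G.WinningStrat own winPlay (fun _ c => σ' c) c0 := by
  refine ⟨hσ', fun ρ hρ0 hplay hcons => ?_⟩
  have hrel := shadowPlay_rel (σ := σ) R hR h_own h_mod hρ0 hcons
  have hshadow : G.IsPlay (shadowPlay own σ c0 ρ) := by
    intro i
    by_cases hown : own (shadowPlay own σ c0 ρ i)
    · rw [shadowPlay_succ_of_own hown]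
      exact hσ.1 [] _ hown
    · rw [shadowPlay_succ_of_not_own hown]
      exact h_step _ _ _ (hrel i).1 (fun h => hown ((h_own _ _ (hrel i).1).2 h)) (hplay i)
  exact h_winPlay _ _ (fun i => (hrel i).1)
    (hσ.2 _ rfl hshadow consistent_shadowPlay)

end shadowPlay

end SGame

theorem winPlayOf_congr {C : Type*} (G : SGame C) (b : Bool) {π ρ : ℕ → C}
    (h : ∀ i, G.final (π i) ↔ G.final (ρ i)) : winPlayOf G b π ↔ winPlayOf G b ρ := by
  have hB : G.BWins π ↔ G.BWins ρ := exists_congr h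
  cases b <;> simp only [winPlayOf, hB, Bool.false_eq_true, if_true, if_false]

section TSO

variable {I S X V : Type*} [DecidableEq I] [DecidableEq X]

theorem UpdStep.st_eq {c c' : Conf I S X V} (h : UpdStep c c') : c'.st = c.st := by
  cases h; rfl

theorem Upds.st_eq {c c' : Conf I S X V} (h : Upds c c') : c'.st = c.st := by
  induction h with
  | refl => rfl
  | tail _ h ih => rw [h.st_eq, ih]

theorem Move.of_upds_instrStep {P : Program I S X V} {q : Bool} {c c1 c' : Conf I S X V}
    {ι : I} {instr : Instr X V} (hu : Upds c c1) (hi : InstrStep P ι instr c1 c') :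
    Move P (true, q) c c' :=
  ⟨c1, c', hu, ⟨ι, instr, hi⟩, by cases q <;> simp [OptUpds, Upds, Relation.ReflTransGen.refl]⟩

theorem Move.of_upds {P : Program I S X V} {q : Bool} {c c1 c' : Conf I S X V}
    (hu : Upds c c1) (h : Move P (true, q) c1 c') : Move P (true, q) c c' := by
  obtain ⟨c2, c3, hu2, hi, hu3⟩ := h
  exact ⟨c2, c3, Relation.ReflTransGen.trans hu hu2, hi, hu3⟩

theorem tsoGame_step_iff {P : Program I S X V} {perm : Bool × Bool} {SF : Set S}
    {c c' : Conf I S X V × Bool} :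
    (tsoGame P perm perm SF).step c c' ↔ c'.2 = !c.2 ∧ Move P perm c.1 c'.1 := by
  obtain ⟨c, b⟩ := c
  obtain ⟨c', b'⟩ := c'
  cases b <;> cases b' <;> simp [tsoGame]

def GameUpds (a b : Conf I S X V × Bool) : Prop := Upds a.1 b.1 ∧ a.2 = b.2

theorem GameUpds.refl (c : Conf I S X V × Bool) : GameUpds c c :=
  ⟨Relation.ReflTransGen.refl, rfl⟩

theorem GameUpds.final_iff {P : Program I S X V} {permA permB : Bool × Bool} {SF : Set S}
    {a b : Conf I S X V × Bool} (h : GameUpds a b) :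
    (tsoGame P permA permB SF).final a ↔ (tsoGame P permA permB SF).final b := by
  simp only [tsoGame, h.2, h.1.st_eq]

theorem GameUpds.step {P : Program I S X V} {q : Bool} {SF : Set S}
    {a b c : Conf I S X V × Bool} (h : GameUpds a b)
    (hs : (tsoGame P (true, q) (true, q) SF).step b c) :
    (tsoGame P (true, q) (true, q) SF).step a c := by
  rw [tsoGame_step_iff] at hs ⊢
  exact ⟨h.2 ▸ hs.1, hs.2.of_upds h.1⟩

variable {P : Program I S X V} {flush : Conf I S X V → Conf I S X V} {xIsA : Bool}
  {σX σbar : Conf I S X V × Bool → Conf I S X V × Bool}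

theorem IsFlushMod.eq_or_gameUpds (hbar : IsFlushMod P flush xIsA σX σbar)
    {c : Conf I S X V × Bool} (hc : c.2 = xIsA) :
    σbar c = σX c ∨ GameUpds (σX c) (σbar c) := by
  by_cases hnr : ∃ ι instr, Instr.isRead instr = false ∧ InstrStep P ι instr c.1 (σX c).1
  · exact Or.inr ⟨((hbar c hc).1 hnr).2.1, ((hbar c hc).1 hnr).2.2.symm⟩
  · exact Or.inl ((hbar c hc).2 hnr)

theorem IsFlushMod.validStrat {q : Bool} {SF : Set S} (hflush : IsFlush flush)
    (hbar : IsFlushMod P flush xIsA σX σbar)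
    (hσX : (tsoGame P (true, q) (true, q) SF).ValidStrat (ownOf xIsA) fun _ c => σX c) :
    (tsoGame P (true, q) (true, q) SF).ValidStrat (ownOf xIsA) fun _ c => σbar c := by
  intro h c hc
  have hcX := hσX h c hc
  by_cases hnr : ∃ ι instr, Instr.isRead instr = false ∧ InstrStep P ι instr c.1 (σX c).1
  · obtain ⟨⟨ι, instr, -, hstep⟩, -, hsnd⟩ := (hbar c hc).1 hnr
    rw [tsoGame_step_iff] at hcX ⊢
    exact ⟨hsnd.trans hcX.1, Move.of_upds_instrStep (hflush c.1).1 hstep⟩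
  · simpa only [(hbar c hc).2 hnr] using hcX

end TSO

/-- Group II: both players may update exactly before their own moves. If `σX` is a
positional winning strategy for player X from `c0`, then its flushing modification
`σbar` is also a winning strategy for player X from `c0`. -/
theorem statement8 {I S X V : Type} [DecidableEq I] [DecidableEq X]
    (P : Program I S X V) (SF : Set S) (xIsA : Bool)
    (G : SGame (Conf I S X V × Bool))
    (hG : G = tsoGame P (true, false) (true, false) SF)
    (flush : Conf I S X V → Conf I S X V) (hflush : IsFlush flush)
    (c0 : Conf I S X V × Bool)
    (σX σbar : Conf I S X V × Bool → Conf I S X V × Bool)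
    (hwin : G.WinningStrat (ownOf xIsA) (winPlayOf G xIsA) (fun _ c => σX c) c0)
    (hbar : IsFlushMod P flush xIsA σX σbar) :
    G.WinningStrat (ownOf xIsA) (winPlayOf G xIsA) (fun _ c => σbar c) c0 := by
  subst hG
  refine SGame.WinningStrat.of_rel _ GameUpds GameUpds.refl
    (fun a b h => by simp only [ownOf, h.2]) (fun a b c h _ => h.step)
    (fun π ρ h => (winPlayOf_congr _ xIsA fun i => (h i).final_iff).1)
    (fun c hc => ?_) (hbar.validStrat hflush hwin.1) hwin
  have hflip : (σX c).2 = !c.2 := (tsoGame_step_iff.1 (hwin.1 [] c hc)).1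
  have hσX_not_own : ¬ ownOf xIsA (σX c) := by
    simp only [ownOf, hflip, ← show c.2 = xIsA from hc, Bool.not_eq_self, not_false_eq_true]
  exact (hbar.eq_or_gameUpds hc).imp_right fun h => ⟨h, hσX_not_own⟩

end TSOGames
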